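/- Let k be a natural number and let v : ℝ × ℝ → ℝ be a tensor-product polynomial of degree at most k in each of the two variables (i.e., v ∈ Q_k). Then ∫₀¹ v(1,y)^2 dy ≤ (k+1)^2 · ∫₀¹ ∫₀¹ v(x,y)^2 dx dy. -/

import Mathlib

/-!
Expand `p ∈ ℝ[X]` of degree `≤ k` in the shifted Legendre polynomials `Lₙ`, which satisfy
`Lₙ(1) = (-1)ⁿ` and `∫₀¹ Lₘ Lₙ = δₘₙ / (2n + 1)`. Then `p(1) = ∑ cₙ (-1)ⁿ` and
`∫₀¹ p² = ∑ cₙ² / (2n + 1)`, so Cauchy–Schwarz and `∑_{n ≤ k} (2n + 1) = (k + 1)²` give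
`p(1)² ≤ (k + 1)² ∫₀¹ p²`. Applying this to `x ↦ v(x, y)` for every `y` and integrating in `y`
gives the inequality on the square.
-/

open Polynomial MeasureTheory

section PolyIntegral

noncomputable def polyIntegral (a b : ℝ) : ℝ[X] →ₗ[ℝ] ℝ where
  toFun p := ∫ x in a..b, p.eval x
  map_add' p q := by
    simp only [eval_add]
    exact intervalIntegral.integral_add (p.continuous.intervalIntegrable a b)
      (q.continuous.intervalIntegrable a b)
  map_smul' c p := by simp [intervalIntegral.integral_const_mul]

variable {a b : ℝ}

theorem polyIntegral_apply (p : ℝ[X]) : polyIntegral a b p = ∫ x in a..b, p.eval x := rfl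

theorem polyIntegral_C_mul (c : ℝ) (p : ℝ[X]) :
    polyIntegral a b (C c * p) = c * polyIntegral a b p := by
  rw [← smul_eq_C_mul, map_smul, smul_eq_mul]

theorem polyIntegral_derivative (p : ℝ[X]) :
    polyIntegral a b (derivative p) = p.eval b - p.eval a :=
  intervalIntegral.integral_eq_sub_of_hasDerivAt (fun x _ => p.hasDerivAt x)
    (p.derivative.continuous.intervalIntegrable a b)

theorem polyIntegral_mul_derivative (p q : ℝ[X]) :
    polyIntegral a b (p * derivative q) =
      p.eval b * q.eval b - p.eval a * q.eval a - polyIntegral a b (derivative p * q) := by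
  have h := polyIntegral_derivative (a := a) (b := b) (p * q)
  rw [derivative_mul, map_add, eval_mul, eval_mul] at h
  linarith

theorem polyIntegral_mul_iterate_derivative (p f : ℝ[X]) (m : ℕ)
    (hf : ∀ j < m, (derivative^[j] f).eval a = 0 ∧ (derivative^[j] f).eval b = 0) :
    polyIntegral a b (p * derivative^[m] f) =
      (-1) ^ m * polyIntegral a b (derivative^[m] p * f) := by
  induction m generalizing f with
  | zero => simp
  | succ m ih =>
    obtain ⟨hfa, hfb⟩ := hf 0 m.succ_pos
    rw [Function.iterate_zero_apply] at hfa hfb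
    rw [Function.iterate_succ_apply, ih (derivative f) fun j hj => hf (j + 1) (by omega),
      polyIntegral_mul_derivative, hfa, hfb, ← Function.iterate_succ_apply' derivative]
    ring

end PolyIntegral

theorem eval_iterate_derivative_eq_zero_of_pow_dvd {R : Type*} [CommRing R] {f q : R[X]}
    {n j : ℕ} {x : R} (hq : q.eval x = 0) (hdvd : q ^ n ∣ f) (hj : j < n) :
    (derivative^[j] f).eval x = 0 := by
  obtain ⟨r, hr⟩ := pow_sub_dvd_iterate_derivative_of_pow_dvd j hdvd
  rw [hr, eval_mul, eval_pow, hq, zero_pow (by omega), zero_mul]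

theorem degree_X_mul_derivative_sub_lt {R : Type*} [CommRing R] {p : R[X]} {n : ℕ}
    (hp : p.natDegree ≤ n) : (X * derivative p - C (n : R) * p).degree < (n : WithBot ℕ) := by
  rw [degree_lt_iff_coeff_zero]
  intro m hm
  rcases m with _ | m
  · simp [Nat.le_zero.mp hm]
  · rw [coeff_sub, coeff_X_mul, coeff_derivative, coeff_C_mul]
    rcases hm.eq_or_lt with rfl | hlt
    · push_cast; ring
    · rw [coeff_eq_zero_of_natDegree_lt (hp.trans_lt hlt)]; ring

noncomputable def shiftedLegendreReal : Sequence ℝ where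
  elems' n := (shiftedLegendre n).map (algebraMap ℤ ℝ)
  degree_eq' n := by rw [degree_map_eq_of_injective (RingHom.injective_int _)]; simp

namespace shiftedLegendreReal

theorem apply (n : ℕ) : shiftedLegendreReal n = (shiftedLegendre n).map (algebraMap ℤ ℝ) := rfl

theorem factorial_mul_eq (n : ℕ) :
    (n.factorial : ℝ[X]) * shiftedLegendreReal n = derivative^[n] (X ^ n * (1 - X) ^ n) := by
  simpa [apply, ← iterate_derivative_map] using
    congrArg (map (algebraMap ℤ ℝ)) (factorial_mul_shiftedLegendre_eq n)

theorem eval_one (n : ℕ) : (shiftedLegendreReal n).eval 1 = (-1) ^ n := by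
  rw [apply, eval_map_algebraMap, shiftedLegendre_eval_symm, sub_self]
  simp [aeval_def, eval₂_at_zero, coeff_shiftedLegendre]

/-- Rodrigues' formula and `n` integrations by parts: the boundary terms vanish because
`Xⁿ (1 - X)ⁿ` has zeros of order `n` at `0` and `1`. -/
theorem polyIntegral_mul_eq_zero {q : ℝ[X]} {n : ℕ} (hq : q.degree < n) :
    polyIntegral 0 1 (q * shiftedLegendreReal n) = 0 := by
  have hvanish : ∀ j < n, (derivative^[j] (X ^ n * (1 - X) ^ n : ℝ[X])).eval 0 = 0 ∧
      (derivative^[j] (X ^ n * (1 - X) ^ n : ℝ[X])).eval 1 = 0 := fun j hj =>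
    ⟨eval_iterate_derivative_eq_zero_of_pow_dvd (q := X) (by simp) (dvd_mul_right _ _) hj,
      eval_iterate_derivative_eq_zero_of_pow_dvd (q := 1 - X) (by simp) (dvd_mul_left _ _) hj⟩
  have h := polyIntegral_mul_iterate_derivative q _ n hvanish
  rw [← factorial_mul_eq, iterate_derivative_eq_zero_of_degree_lt hq, zero_mul, map_zero,
    mul_zero, mul_left_comm, ← C_eq_natCast, ← smul_eq_C_mul, map_smul, smul_eq_zero] at h
  exact h.resolve_left (by positivity)

theorem polyIntegral_mul_self (n : ℕ) :
    polyIntegral 0 1 (shiftedLegendreReal n * shiftedLegendreReal n) = 1 / (2 * n + 1) := by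
  have hL1 : (shiftedLegendreReal n).eval 1 ^ 2 = 1 := by
    rw [eval_one, ← pow_mul, mul_comm, pow_mul, neg_one_sq, one_pow]
  set L := shiftedLegendreReal n
  -- `X L' - n L` has degree `< n`, hence is orthogonal to `L`: integrating `(X L²)'` gives
  -- `L(1)² = (2n + 1) ∫₀¹ L²`.
  have hFTC := polyIntegral_derivative (a := 0) (b := 1) (X * L ^ 2)
  have hsplit : derivative (X * L ^ 2) =
      C (2 * n + 1 : ℝ) * (L * L) + C 2 * ((X * derivative L - C (n : ℝ) * L) * L) := by
    simp only [derivative_mul, derivative_pow, derivative_X, map_add, map_mul, map_natCast,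
      map_ofNat, map_one]
    ring
  rw [hsplit, map_add, polyIntegral_C_mul, polyIntegral_C_mul, polyIntegral_mul_eq_zero
    (degree_X_mul_derivative_sub_lt (Sequence.natDegree_eq _ n).le)] at hFTC
  simp only [eval_mul, eval_pow, eval_X, hL1, zero_mul, sub_zero, one_mul, mul_zero,
    add_zero] at hFTC
  rw [eq_div_iff (by positivity), mul_comm]
  exact hFTC

theorem polyIntegral_mul (m n : ℕ) :
    polyIntegral 0 1 (shiftedLegendreReal m * shiftedLegendreReal n) =
      if m = n then (1 / (2 * n + 1) : ℝ) else 0 := by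
  rcases lt_trichotomy m n with h | rfl | h
  · rw [if_neg h.ne, polyIntegral_mul_eq_zero (by simpa using h)]
  · rw [if_pos rfl, polyIntegral_mul_self]
  · rw [if_neg h.ne', mul_comm, polyIntegral_mul_eq_zero (by simpa using h)]

theorem exists_eq_sum_smul {p : ℝ[X]} {k : ℕ} (hp : p.natDegree ≤ k) :
    ∃ c : ℕ → ℝ, p = ∑ n ∈ Finset.range (k + 1), c n • shiftedLegendreReal n := by
  have hspan : p ∈ Submodule.span ℝ (shiftedLegendreReal '' Set.Iic k) := by
    rw [Sequence.span_degreeLE _ fun i _ =>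
      (leadingCoeff_ne_zero.mpr (Sequence.ne_zero _ i)).isUnit]
    exact mem_degreeLE.mpr (natDegree_le_iff_degree_le.mp hp)
  obtain ⟨c, hc, rfl⟩ := (Finsupp.mem_span_image_iff_linearCombination ℝ).mp hspan
  refine ⟨c, Finsupp.linearCombination_apply_of_mem_supported ℝ ?_⟩
  rwa [Finset.coe_range, Set.Iio_add_one_eq_Iic]

end shiftedLegendreReal

theorem sum_range_two_mul_add_one (m : ℕ) : ∑ n ∈ Finset.range m, (2 * n + 1 : ℝ) = m ^ 2 := by
  induction m with
  | zero => simp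
  | succ m ih => rw [Finset.sum_range_succ, ih]; push_cast; ring

theorem sq_eval_one_le_mul_integral_sq {p : ℝ[X]} {k : ℕ} (hp : p.natDegree ≤ k) :
    p.eval 1 ^ 2 ≤ (k + 1) ^ 2 * ∫ x in (0:ℝ)..1, p.eval x ^ 2 := by
  obtain ⟨c, rfl⟩ := shiftedLegendreReal.exists_eq_sum_smul hp
  set s := Finset.range (k + 1)
  set p := ∑ n ∈ s, c n • shiftedLegendreReal n with hp_def
  have hcoeff : ∀ n ∈ s, polyIntegral 0 1 (p * shiftedLegendreReal n) = c n / (2 * n + 1) := by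
    intro n hn
    simp_rw [p, Finset.sum_mul, map_sum, smul_mul_assoc, map_smul,
      shiftedLegendreReal.polyIntegral_mul, smul_eq_mul, mul_ite, mul_zero,
      Finset.sum_ite_eq' s n, if_pos hn, mul_one_div]
  have hnorm : ∫ x in (0:ℝ)..1, p.eval x ^ 2 = ∑ n ∈ s, c n ^ 2 / (2 * n + 1) := by
    simp_rw [sq, ← eval_mul, ← polyIntegral_apply]
    nth_rw 2 [hp_def]
    rw [Finset.mul_sum, map_sum]
    refine Finset.sum_congr rfl fun n hn => ?_
    rw [mul_smul_comm, map_smul, hcoeff n hn, smul_eq_mul, mul_div_assoc]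
  have hval : p.eval 1 = ∑ n ∈ s, c n * (-1) ^ n := by
    simp [p, eval_finsetSum, shiftedLegendreReal.eval_one]
  have hCS := Finset.sq_sum_div_le_sum_sq_div s (fun n => c n * (-1) ^ n)
    (g := fun n => 2 * n + 1) (fun n _ => by positivity)
  simp only [mul_pow, pow_right_comm _ _ 2, neg_one_sq, one_pow, mul_one] at hCS
  rw [sum_range_two_mul_add_one, div_le_iff₀ (by positivity)] at hCS
  rw [hval, hnorm]
  push_cast at hCS
  linarith

theorem integral_sq_trace_le_of_slices {f : ℝ → ℝ → ℝ} {k : ℕ}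
    (hf : Continuous (Function.uncurry f))
    (hslice : ∀ y, ∃ p : ℝ[X], p.natDegree ≤ k ∧ ∀ x, f x y = p.eval x) :
    ∫ y in (0:ℝ)..1, f 1 y ^ 2 ≤ (k + 1) ^ 2 * ∫ x in (0:ℝ)..1, ∫ y in (0:ℝ)..1, f x y ^ 2 := by
  have hslice_le : ∀ y, f 1 y ^ 2 ≤ (k + 1) ^ 2 * ∫ x in (0:ℝ)..1, f x y ^ 2 := fun y => by
    obtain ⟨p, hp, hfp⟩ := hslice y
    simpa only [hfp] using sq_eval_one_le_mul_integral_sq hp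
  have hf2 : Continuous (Function.uncurry fun x y => f x y ^ 2) := hf.pow 2
  have hslice_cont : Continuous fun y => ∫ x in (0:ℝ)..1, f x y ^ 2 :=
    intervalIntegral.continuous_parametric_intervalIntegral_of_continuous'
      (f := fun y x => f x y ^ 2) (hf2.comp continuous_swap) 0 1
  rw [intervalIntegral_intervalIntegral_swap
      ((hf2.continuousOn.integrableOn_compact (isCompact_uIcc.prod isCompact_uIcc)).mono_set
        (Set.prod_mono Set.uIoc_subset_uIcc Set.uIoc_subset_uIcc)),
    ← intervalIntegral.integral_const_mul]
  exact intervalIntegral.integral_mono_on zero_le_one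
    ((hf2.comp (continuous_const.prodMk continuous_id)).intervalIntegrable 0 1)
    ((continuous_const.mul hslice_cont).intervalIntegrable 0 1) fun y _ => hslice_le y

theorem MvPolynomial.exists_natDegree_le_eval_cons {R : Type*} [CommRing R] {n : ℕ}
    (P : MvPolynomial (Fin (n + 1)) R) (s : Fin n → R) :
    ∃ p : R[X], p.natDegree ≤ P.degreeOf 0 ∧ ∀ x, MvPolynomial.eval (Fin.cons x s) P = p.eval x :=
  ⟨_, natDegree_map_le.trans (MvPolynomial.natDegree_finSuccEquiv P).le,
    fun x => MvPolynomial.eval_eq_eval_mv_eval' s x P⟩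

/-- Discrete trace inequality on the unit square with the sharp constant `(k+1)^2`:
if `v` is a tensor-product polynomial of degree at most `k` in each of the two
variables (i.e. `v ∈ Q_k`), then
`∫ y in (0,1), v(1,y)^2 ≤ (k+1)^2 * ∫ x in (0,1), ∫ y in (0,1), v(x,y)^2`. -/
theorem discrete_trace_inequality_unit_square (k : ℕ) (v : ℝ × ℝ → ℝ)
    (P : MvPolynomial (Fin 2) ℝ)
    (hP : ∀ i : Fin 2, P.degreeOf i ≤ k)
    (hv : ∀ x y : ℝ, v (x, y) = MvPolynomial.eval ![x, y] P) :
    (∫ y in (0:ℝ)..1, (v (1, y)) ^ 2) ≤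
      ((k : ℝ) + 1) ^ 2 * ∫ x in (0:ℝ)..1, ∫ y in (0:ℝ)..1, (v (x, y)) ^ 2 := by
  have hv_cont : Continuous v := by
    rw [show v = fun q => MvPolynomial.eval ![q.1, q.2] P from funext fun q => hv q.1 q.2]
    exact (MvPolynomial.continuous_eval P).comp (by fun_prop)
  refine integral_sq_trace_le_of_slices (f := fun x y => v (x, y)) hv_cont fun y => ?_
  obtain ⟨p, hp, hpP⟩ := MvPolynomial.exists_natDegree_le_eval_cons P ![y]
  exact ⟨p, hp.trans (hP 0), fun x => (hv x y).trans (hpP x)⟩
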